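/- Define Jackson's q-sine and q-cosine as formal power series over Q(q): sin_q(z) = sum_{n≥0} (-1)^n z^(2n+1)/[2n+1]_q! and cos_q(z) = sum_{n≥0} (-1)^n z^(2n)/[2n]_q!. Then sin_q(z)·sin_{1/q}(z) + cos_q(z)·cos_{1/q}(z) = 1. -/

import Mathlib

noncomputable section
open Finset PowerSeries

abbrev Fq : Type := RatFunc ℚ

/-- The variable `q` as element of the field of rational functions `ℚ(q)`. -/
def qv : Fq := RatFunc.X

/-- The q-integer `[m]_q = 1 + q + ... + q^(m-1)`. -/
def qInt (x : Fq) (m : ℕ) : Fq := ∑ i ∈ Finset.range m, x ^ i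

/-- The q-factorial `[m]_q! = [1]_q [2]_q ⋯ [m]_q`. -/
def qFact (x : Fq) (m : ℕ) : Fq := ∏ i ∈ Finset.range m, qInt x (i + 1)

/-- Jackson's `sin_q(z) = ∑ (-1)^n z^(2n+1)/[2n+1]_q!`. -/
def qsin (x : Fq) : PowerSeries Fq :=
  PowerSeries.mk fun m => if m % 2 = 1 then (-1 : Fq) ^ (m / 2) / qFact x m else 0

/-- Jackson's `cos_q(z) = ∑ (-1)^n z^(2n)/[2n]_q!`. -/
def qcos (x : Fq) : PowerSeries Fq :=
  PowerSeries.mk fun m => if m % 2 = 0 then (-1 : Fq) ^ (m / 2) / qFact x m else 0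

/-!
Let `e_q(z) = ∑ z^m / [m]_q!`. Since `[m]_{1/q}! = q^{-m(m-1)/2} [m]_q!`, the coefficients `c_n` of
`e_q(-z) e_{1/q}(z)` satisfy `[n+1]_q c_{n+1} = (q^n - 1) c_n`, so `e_q(-z) e_{1/q}(z) = 1`.
With `i² = -1` one has `sin_q z = (e_q(iz) - e_q(-iz)) / 2i` and `cos_q z = (e_q(iz) + e_q(-iz)) / 2`,
hence `sin_q sin_{1/q} + cos_q cos_{1/q} = (e_q(iz) e_{1/q}(-iz) + e_q(-iz) e_{1/q}(iz)) / 2 = 1`;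
a parity computation on coefficients does this without adjoining `i`.
-/

namespace PowerSeries

variable {R : Type*} [CommRing R]

/-- With `i² = -1`, `sinPart E z = (E(iz) - E(-iz)) / 2i`, written out coefficientwise so that
`i` need not be adjoined to `R`. -/
def sinPart (E : R⟦X⟧) : R⟦X⟧ :=
  mk fun m => if m % 2 = 1 then (-1) ^ (m / 2) * coeff m E else 0

/-- With `i² = -1`, `cosPart E z = (E(iz) + E(-iz)) / 2`. -/
def cosPart (E : R⟦X⟧) : R⟦X⟧ :=
  mk fun m => if m % 2 = 0 then (-1) ^ (m / 2) * coeff m E else 0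

lemma sinPart_mul_add_cosPart_mul_term (i j : ℕ) (a b : R) :
    (if i % 2 = 1 then (-1) ^ (i / 2) * a else 0) * (if j % 2 = 1 then (-1) ^ (j / 2) * b else 0)
      + (if i % 2 = 0 then (-1) ^ (i / 2) * a else 0) *
        (if j % 2 = 0 then (-1) ^ (j / 2) * b else 0)
      = if (i + j) % 2 = 0 then (-1) ^ ((i + j) / 2) * ((-1) ^ i * a * b) else 0 := by
  obtain ⟨k, rfl | rfl⟩ := Nat.even_or_odd' i <;> obtain ⟨l, rfl | rfl⟩ := Nat.even_or_odd' j <;>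
    simp [Nat.add_mod, Nat.add_div, pow_add, pow_mul] <;> ring

theorem coeff_sinPart_mul_add_cosPart_mul (E F : R⟦X⟧) (n : ℕ) :
    coeff n (sinPart E * sinPart F + cosPart E * cosPart F) =
      if n % 2 = 0 then (-1) ^ (n / 2) * coeff n (rescale (-1) E * F) else 0 := by
  simp only [map_add, coeff_mul, ← sum_add_distrib, sinPart, cosPart, coeff_mk, coeff_rescale]
  rw [sum_congr rfl fun p hp => by rw [sinPart_mul_add_cosPart_mul_term, mem_antidiagonal.1 hp]]
  split_ifs
  · simp only [mul_sum, mul_assoc]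
  · exact sum_const_zero

theorem sinPart_mul_add_cosPart_mul_eq_one {E F : R⟦X⟧} (h : rescale (-1) E * F = 1) :
    sinPart E * sinPart F + cosPart E * cosPart F = 1 := by
  ext n
  rw [coeff_sinPart_mul_add_cosPart_mul, h, coeff_one]
  rcases n with _ | n <;> simp

end PowerSeries

section QAnalogues

variable {x : Fq}

lemma qInt_zero (x : Fq) : qInt x 0 = 0 := sum_range_zero _

lemma qInt_add (x : Fq) (i j : ℕ) : qInt x (i + j) = qInt x i + x ^ i * qInt x j := by
  simp only [qInt, sum_range_add, mul_sum, pow_add]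

lemma qInt_succ_ne_zero (hx : ¬ IsOfFinOrder x) (m : ℕ) : qInt x (m + 1) ≠ 0 := by
  intro h
  have hpow : x ^ (m + 1) = 1 := by
    have := geom_sum_mul x (m + 1)
    rwa [← qInt, h, zero_mul, eq_comm, sub_eq_zero] at this
  exact hx (isOfFinOrder_iff_pow_eq_one.2 ⟨m + 1, m.succ_pos, hpow⟩)

lemma qInt_inv_succ_mul_pow (hx : x ≠ 0) (m : ℕ) : qInt x⁻¹ (m + 1) * x ^ m = qInt x (m + 1) := by
  rw [qInt, sum_mul, ← sum_range_reflect]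
  refine sum_congr rfl fun i hi => ?_
  rw [inv_pow, inv_mul_eq_div, div_eq_iff (pow_ne_zero _ hx), ← pow_add]
  congr 1
  have := mem_range.1 hi
  omega

lemma qFact_succ (x : Fq) (m : ℕ) : qFact x (m + 1) = qFact x m * qInt x (m + 1) :=
  prod_range_succ _ _

lemma qFact_inv_mul_pow_choose (hx : x ≠ 0) (m : ℕ) :
    qFact x⁻¹ m * x ^ m.choose 2 = qFact x m := by
  induction m with
  | zero => simp [qFact]
  | succ m ih =>
    rw [qFact_succ, qFact_succ, Nat.choose_succ_succ', Nat.choose_one_right, pow_add, ← ih,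
      ← qInt_inv_succ_mul_pow hx]
    ring

lemma inv_qFact_inv (hx : x ≠ 0) (m : ℕ) :
    (qFact x⁻¹ m)⁻¹ = x ^ m.choose 2 * (qFact x m)⁻¹ := by
  rw [← qFact_inv_mul_pow_choose hx, mul_inv, mul_comm (qFact x⁻¹ m)⁻¹,
    mul_inv_cancel_left₀ (pow_ne_zero _ hx)]

lemma qInt_succ_mul_inv_qFact_succ (hx : ∀ m, qInt x (m + 1) ≠ 0) (m : ℕ) :
    qInt x (m + 1) * (qFact x (m + 1))⁻¹ = (qFact x m)⁻¹ := by
  rw [qFact_succ, mul_inv, mul_comm (qFact x m)⁻¹, mul_inv_cancel_left₀ (hx m)]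

end QAnalogues

lemma qv_not_isOfFinOrder : ¬ IsOfFinOrder qv := fun h => by
  obtain ⟨n, hn, hpow⟩ := isOfFinOrder_iff_pow_eq_one.1 h
  have hX : (Polynomial.X ^ n : Polynomial ℚ) = 1 :=
    RatFunc.algebraMap_injective ℚ (by simpa [qv] using hpow)
  simpa [hn.ne'] using congrArg Polynomial.natDegree hX

def qExp (x : Fq) : PowerSeries Fq := mk fun m => (qFact x m)⁻¹

section QExp

variable {x : Fq}

lemma coeff_rescale_neg_one_qExp_mul_qExp_inv (hx : x ≠ 0) (n : ℕ) :
    coeff n (rescale (-1) (qExp x) * qExp x⁻¹) = ∑ p ∈ antidiagonal n,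
      (-1) ^ p.1 * x ^ p.2.choose 2 * ((qFact x p.1)⁻¹ * (qFact x p.2)⁻¹) := by
  simp only [coeff_mul, coeff_rescale, qExp, coeff_mk, inv_qFact_inv hx]
  exact sum_congr rfl fun p _ => by ring

/-- Split `[n+1]_q = [i]_q + q^i [j]_q` in each term `i + j = n + 1` and shift indices. -/
lemma qInt_succ_mul_coeff_succ (hx0 : x ≠ 0) (hx : ∀ m, qInt x (m + 1) ≠ 0) (n : ℕ) :
    qInt x (n + 1) * coeff (n + 1) (rescale (-1) (qExp x) * qExp x⁻¹) =
      (x ^ n - 1) * coeff n (rescale (-1) (qExp x) * qExp x⁻¹) := by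
  simp only [coeff_rescale_neg_one_qExp_mul_qExp_inv hx0, mul_sum]
  have hsplit : ∀ p ∈ antidiagonal (n + 1),
      qInt x (n + 1) * ((-1) ^ p.1 * x ^ p.2.choose 2 * ((qFact x p.1)⁻¹ * (qFact x p.2)⁻¹)) =
        (-1) ^ p.1 * x ^ p.2.choose 2 * (qInt x p.1 * (qFact x p.1)⁻¹) * (qFact x p.2)⁻¹ +
          (-1) ^ p.1 * x ^ p.2.choose 2 * x ^ p.1 * (qFact x p.1)⁻¹ *
            (qInt x p.2 * (qFact x p.2)⁻¹) := fun p hp => by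
    rw [← mem_antidiagonal.1 hp, qInt_add]
    ring
  rw [sum_congr rfl hsplit, sum_add_distrib, Nat.sum_antidiagonal_succ, Nat.sum_antidiagonal_succ']
  simp only [qInt_zero, zero_mul, mul_zero, zero_add,
    qInt_succ_mul_inv_qFact_succ hx, Nat.choose_succ_succ', Nat.choose_one_right, ← sum_add_distrib]
  refine sum_congr rfl fun p hp => ?_
  rw [← mem_antidiagonal.1 hp]
  ring

theorem rescale_neg_one_qExp_mul_qExp_inv (hx0 : x ≠ 0) (hx : ∀ m, qInt x (m + 1) ≠ 0) :
    rescale (-1) (qExp x) * qExp x⁻¹ = 1 := by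
  ext n
  rw [coeff_one]
  induction n with
  | zero => simp [coeff_rescale_neg_one_qExp_mul_qExp_inv hx0, qFact]
  | succ n ih =>
    have hrhs : (x ^ n - 1) * coeff n (rescale (-1) (qExp x) * qExp x⁻¹) = 0 := by
      rw [ih]
      split_ifs with hn <;> simp [hn]
    rw [if_neg n.succ_ne_zero]
    exact (mul_eq_zero.1 ((qInt_succ_mul_coeff_succ hx0 hx n).trans hrhs)).resolve_left (hx n)

end QExp

lemma qsin_eq_sinPart (x : Fq) : qsin x = sinPart (qExp x) := by
  ext m
  simp [qsin, sinPart, qExp, div_eq_mul_inv]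

lemma qcos_eq_cosPart (x : Fq) : qcos x = cosPart (qExp x) := by
  ext m
  simp [qcos, cosPart, qExp, div_eq_mul_inv]

theorem jackson_q_sine_cosine_pair :
    qsin qv * qsin qv⁻¹ + qcos qv * qcos qv⁻¹ = 1 := by
  rw [qsin_eq_sinPart, qsin_eq_sinPart, qcos_eq_cosPart, qcos_eq_cosPart]
  exact sinPart_mul_add_cosPart_mul_eq_one <|
    rescale_neg_one_qExp_mul_qExp_inv RatFunc.X_ne_zero (qInt_succ_ne_zero qv_not_isOfFinOrder)
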